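/- arXiv:1807.06149 — 2 statements merged into one kernel-verified Lean document; each statement's English description precedes it below -/
import Mathlib

section
/- Let Φ be a finite set of propositional variables, let A ⊊ Φ be a proper subset, and let 𝔙 ⊆ 2^Φ be an arbitrary set of variable assignments. Then A belongs to 𝔙̂, the closure of 𝔙 under intersections of nonempty subfamilies, if and only if there is no element a ∈ Φ \ A such that 𝔙 ⊨ A → {a}; equivalently, A ∈ 𝔙̂ if and only if for every a ∈ Φ \ A there exists B ∈ 𝔙 with A ⊆ B and a ∉ B. -/
/-!
`A ∈ 𝔙̂` exactly when `A` is the intersection of the members of `𝔙` containing it, i.e. when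
every `a ∉ A` is excluded by some member of `𝔙` containing `A`; and `𝔙 ⊨ A → {a}` says precisely
that no such member excludes `a`. Properness of `A` makes the family of supersets nonempty.
-/

/-- `V ⊨ A → B`: a variable assignment `V` (identified with the set of variables
assigned true) is a model of the implication `A → B`. -/
def IsModelOfImp {Φ : Type*} (V A B : Set Φ) : Prop :=
  ¬ A ⊆ V ∨ B ⊆ V

/-- `𝔙 ⊨ A → B`: every assignment in `𝔙` is a model of `A → B`. -/
def FamModels {Φ : Type*} (𝔙 : Set (Set Φ)) (A B : Set Φ) : Prop :=
  ∀ V ∈ 𝔙, IsModelOfImp V A B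

/-- `𝔙̂`: the closure of `𝔙` under intersections of nonempty subfamilies. -/
def interClosure {Φ : Type*} (𝔙 : Set (Set Φ)) : Set (Set Φ) :=
  {X | ∃ S ⊆ 𝔙, S.Nonempty ∧ X = ⋂₀ S}

section

variable {Φ : Type*} {𝔙 : Set (Set Φ)} {A : Set Φ}

theorem famModels_singleton_iff {a : Φ} :
    FamModels 𝔙 A {a} ↔ ∀ B ∈ 𝔙, A ⊆ B → a ∈ B := by
  simp only [FamModels, IsModelOfImp, Set.singleton_subset_iff, or_iff_not_imp_left, not_not]

theorem exists_superset_notMem_of_mem_interClosure (hA : A ∈ interClosure 𝔙) {a : Φ}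
    (ha : a ∉ A) : ∃ B ∈ 𝔙, A ⊆ B ∧ a ∉ B := by
  obtain ⟨S, hS𝔙, -, rfl⟩ := hA
  obtain ⟨B, hBS, haB⟩ : ∃ B ∈ S, a ∉ B := by simpa using ha
  exact ⟨B, hS𝔙 hBS, Set.sInter_subset_of_mem hBS, haB⟩

theorem sInter_supersets_eq (h : ∀ a ∉ A, ∃ B ∈ 𝔙, A ⊆ B ∧ a ∉ B) :
    ⋂₀ {B ∈ 𝔙 | A ⊆ B} = A := by
  refine Set.Subset.antisymm (fun x hx => ?_) (Set.subset_sInter fun B hB => hB.2)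
  by_contra hxA
  obtain ⟨B, hB, hAB, hxB⟩ := h x hxA
  exact hxB (hx B ⟨hB, hAB⟩)

theorem mem_interClosure_iff (hA : A ≠ Set.univ) :
    A ∈ interClosure 𝔙 ↔ ∀ a ∉ A, ∃ B ∈ 𝔙, A ⊆ B ∧ a ∉ B := by
  refine ⟨fun hA𝔙 _ => exists_superset_notMem_of_mem_interClosure hA𝔙, fun h => ?_⟩
  obtain ⟨a, haA⟩ := (Set.ne_univ_iff_exists_notMem A).mp hA
  obtain ⟨B, hB, hAB, -⟩ := h a haA
  exact ⟨{B ∈ 𝔙 | A ⊆ B}, fun _ hB => hB.1, ⟨B, hB, hAB⟩, (sInter_supersets_eq h).symm⟩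

end

theorem stmt_0_general {Φ : Type*} (A : Set Φ) (hA : A ⊂ Set.univ)
    (𝔙 : Set (Set Φ)) :
    (A ∈ interClosure 𝔙 ↔ ¬ ∃ a ∈ Set.univ \ A, FamModels 𝔙 A {a}) ∧
    (A ∈ interClosure 𝔙 ↔ ∀ a ∈ Set.univ \ A, ∃ B ∈ 𝔙, A ⊆ B ∧ a ∉ B) := by
  have key : A ∈ interClosure 𝔙 ↔ ∀ a ∈ Set.univ \ A, ∃ B ∈ 𝔙, A ⊆ B ∧ a ∉ B := by
    simpa using mem_interClosure_iff hA.ne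
  refine ⟨key.trans ?_, key⟩
  simp only [famModels_singleton_iff, not_exists, not_and, not_forall, exists_prop]

theorem stmt_0 {Φ : Type*} [Fintype Φ] (A : Set Φ) (hA : A ⊂ Set.univ)
    (𝔙 : Set (Set Φ)) :
    (A ∈ interClosure 𝔙 ↔ ¬ ∃ a ∈ Set.univ \ A, FamModels 𝔙 A {a}) ∧
    (A ∈ interClosure 𝔙 ↔ ∀ a ∈ Set.univ \ A, ∃ B ∈ 𝔙, A ⊆ B ∧ a ∉ B) :=
  stmt_0_general A hA 𝔙
end

section
/- Let Φ be a finite set of propositional variables and let ℱ ⊆ 2^Φ be any family of subsets of Φ closed under intersections of nonempty subfamilies. Then there exists a finite set ℋ of implications, i.e., pairs (A, B) with A ⊆ Φ and B ⊆ Φ ∪ {⊥} for a symbol ⊥ ∉ Φ, such that ℱ is exactly the set of common models of ℋ, where V ⊆ Φ is a model of (A, B) if A ⊄ V or B ⊆ V (and B ⊆ V is impossible when ⊥ ∈ B). -/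
/-- An implication over `Φ`: a pair `(A, B)` with `A ⊆ Φ` and
`B ⊆ Φ ∪ {⊥}`, where the falsum `⊥ ∉ Φ` is encoded as `Option.none`
(so `Φ ∪ {⊥}` is encoded as `Option Φ`). -/
abbrev Implication (Φ : Type*) := Set Φ × Set (Option Φ)

/-- `V ⊆ Φ` is a model of the implication `(A, B)` if `A ⊄ V` or `B ⊆ V`
(where `V` is viewed inside `Φ ∪ {⊥}` via `some`, so `B ⊆ V` is impossible
when `⊥ ∈ B`). -/
def IsModel {Φ : Type*} (V : Set Φ) (imp : Implication Φ) : Prop :=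
  ¬ imp.1 ⊆ V ∨ imp.2 ⊆ Option.some '' V

/-- `Mod ℋ`: the set of common models of all implications in `ℋ`. -/
def Models {Φ : Type*} (ℋ : Set (Implication Φ)) : Set (Set Φ) :=
  {V | ∀ imp ∈ ℋ, IsModel V imp}

/-!
Send each `V ⊆ Φ` to the implication `V → ⋂ {W ∈ ℱ | V ⊆ W}`, the intersection taken inside
`Φ ∪ {⊥}`, so that its consequent contains `⊥` exactly when no member of `ℱ` lies above `V`.
Every member of `ℱ` satisfies all these implications, and a set `U` satisfying its own
implication is the intersection of the members of `ℱ` above it, hence lies in `ℱ`.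
-/

namespace Implication

variable {Φ : Type*}

def closure (ℱ : Set (Set Φ)) (V : Set Φ) : Implication Φ :=
  (V, ⋂ W ∈ {W | W ∈ ℱ ∧ V ⊆ W}, Option.some '' W)

variable {ℱ : Set (Set Φ)}

theorem isModel_closure_of_mem {U : Set Φ} (hU : U ∈ ℱ) (V : Set Φ) :
    IsModel U (closure ℱ V) := by
  by_cases hVU : V ⊆ U
  · exact Or.inr (Set.biInter_subset_of_mem ⟨hU, hVU⟩)
  · exact Or.inl hVU

theorem mem_of_isModel_closure (hℱ : ∀ S ⊆ ℱ, S.Nonempty → ⋂₀ S ∈ ℱ) {U : Set Φ}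
    (hU : IsModel U (closure ℱ U)) : U ∈ ℱ := by
  have hcons : (⋂ W ∈ {W | W ∈ ℱ ∧ U ⊆ W}, Option.some '' W) ⊆ Option.some '' U :=
    hU.resolve_left fun h => h subset_rfl
  have hne : {W | W ∈ ℱ ∧ U ⊆ W}.Nonempty := by
    by_contra hempty
    rw [Set.not_nonempty_iff_eq_empty] at hempty
    have hnone : (none : Option Φ) ∈ ⋂ W ∈ {W | W ∈ ℱ ∧ U ⊆ W}, Option.some '' W := by
      simp [hempty]
    simpa using hcons hnone
  have hle : ⋂₀ {W | W ∈ ℱ ∧ U ⊆ W} ⊆ U := fun x hx => by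
    have hsome : some x ∈ ⋂ W ∈ {W | W ∈ ℱ ∧ U ⊆ W}, Option.some '' W :=
      Set.mem_iInter₂.mpr fun W hW => Set.mem_image_of_mem _ (hx W hW)
    simpa using hcons hsome
  have hge : U ⊆ ⋂₀ {W | W ∈ ℱ ∧ U ⊆ W} := Set.subset_sInter fun _ hW => hW.2
  exact hle.antisymm hge ▸ hℱ _ (fun _ hW => hW.1) hne

theorem models_range_closure (hℱ : ∀ S ⊆ ℱ, S.Nonempty → ⋂₀ S ∈ ℱ) :
    Models (Set.range (closure ℱ)) = ℱ := by
  ext U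
  constructor
  · exact fun hU => mem_of_isModel_closure hℱ (hU _ ⟨U, rfl⟩)
  · rintro hU _ ⟨V, rfl⟩
    exact isModel_closure_of_mem hU V

end Implication

theorem stmt_7 {Φ : Type*} [Fintype Φ] (ℱ : Set (Set Φ))
    (hℱ : ∀ S ⊆ ℱ, S.Nonempty → ⋂₀ S ∈ ℱ) :
    ∃ ℋ : Set (Implication Φ), ℋ.Finite ∧ ℱ = Models ℋ :=
  ⟨_, Set.finite_range _, (Implication.models_range_closure hℱ).symm⟩
end
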